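/- arXiv:1311.4920 — 6 statements merged into one kernel-verified Lean document; each statement's English description precedes it below -/
import Mathlib

section
/- Let f, g ∈ ℚ[t] be nonzero coprime polynomials. For every prime p there exists a constant c > 0 such that for all t ∈ ℚ, max(|f(t)|_p, |g(t)|_p) ≥ c, where |·|_p denotes the p-adic absolute value. -/
private lemma padicNorm_pow' (p : ℕ) [Fact p.Prime] (q : ℚ) (n : ℕ) :
    padicNorm p (q ^ n) = padicNorm p q ^ n := by
  induction n with
  | zero => simp [padicNorm.one]
  | succ n ih => rw [pow_succ, pow_succ, padicNorm.mul, ih]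

/-- bound on coefficient norms -/
private noncomputable def Cb (p : ℕ) (a : Polynomial ℚ) : ℚ :=
  (Finset.range (a.natDegree + 1)).sup' Finset.nonempty_range_add_one
    fun i => padicNorm p (a.coeff i)

private lemma Cb_nonneg (p : ℕ) (a : Polynomial ℚ) : 0 ≤ Cb p a := by
  unfold Cb
  exact le_trans (padicNorm.nonneg (a.coeff 0))
    (Finset.le_sup' (fun i => padicNorm p (a.coeff i))
      (Finset.mem_range.2 (Nat.succ_pos _)))

private lemma coeff_le_Cb (p : ℕ) (a : Polynomial ℚ) (i : ℕ) :
    padicNorm p (a.coeff i) ≤ Cb p a := by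
  by_cases hi : i ≤ a.natDegree
  · unfold Cb
    exact Finset.le_sup' (fun i => padicNorm p (a.coeff i))
      (Finset.mem_range.2 (Nat.lt_succ_of_le hi))
  · rw [Polynomial.coeff_eq_zero_of_natDegree_lt (not_le.1 hi), padicNorm.zero]
    exact Cb_nonneg p a

private lemma eval_norm_le (p : ℕ) [Fact p.Prime] (a : Polynomial ℚ) (t C : ℚ)
    (hC0 : 0 ≤ C) (hC : ∀ i, padicNorm p (a.coeff i) ≤ C) {m : ℕ}
    (hm : a.natDegree ≤ m) :
    padicNorm p (a.eval t) ≤ C * max 1 (padicNorm p t) ^ m := by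
  have hM1 : (1 : ℚ) ≤ max 1 (padicNorm p t) := le_max_left _ _
  rw [Polynomial.eval_eq_sum_range]
  apply padicNorm.sum_le'
  · intro i hi
    rw [padicNorm.mul, padicNorm_pow']
    have h1 : padicNorm p t ^ i ≤ max 1 (padicNorm p t) ^ m := by
      calc padicNorm p t ^ i ≤ max 1 (padicNorm p t) ^ i :=
            pow_le_pow_left₀ (padicNorm.nonneg t) (le_max_right _ _) i
        _ ≤ max 1 (padicNorm p t) ^ m :=
            pow_le_pow_right₀ hM1 (le_trans (Nat.lt_succ_iff.1 (Finset.mem_range.1 hi)) hm)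
    exact mul_le_mul (hC i) h1 (pow_nonneg (padicNorm.nonneg t) i) hC0
  · exact mul_nonneg hC0 (pow_nonneg (le_trans zero_le_one hM1) m)

private lemma eval_norm_big (p : ℕ) [Fact p.Prime] (a : Polynomial ℚ) (ha : a ≠ 0)
    (t : ℚ) (ht : max 1 (Cb p a / padicNorm p a.leadingCoeff) < padicNorm p t) :
    padicNorm p a.leadingCoeff ≤ padicNorm p (a.eval t) := by
  have hL : a.leadingCoeff ≠ 0 := Polynomial.leadingCoeff_ne_zero.2 ha
  have hLN : 0 < padicNorm p a.leadingCoeff :=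
    lt_of_le_of_ne (padicNorm.nonneg _) (Ne.symm (padicNorm.nonzero hL))
  by_cases hn0 : a.natDegree = 0
  · obtain ⟨c, rfl⟩ := Polynomial.natDegree_eq_zero.1 hn0
    simp [Polynomial.leadingCoeff]
  · have hn : 1 ≤ a.natDegree := Nat.one_le_iff_ne_zero.2 hn0
    have ht1 : (1 : ℚ) < padicNorm p t := lt_of_le_of_lt (le_max_left _ _) ht
    have ht0 : (0 : ℚ) < padicNorm p t := lt_trans one_pos ht1
    have htC : Cb p a < padicNorm p a.leadingCoeff * padicNorm p t := by
      have := lt_of_le_of_lt (le_max_right 1 _) ht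
      rw [div_lt_iff₀ hLN] at this
      linarith [this, mul_comm (padicNorm p t) (padicNorm p a.leadingCoeff)]
    -- norm of leading term
    have hlead : padicNorm p (a.leadingCoeff * t ^ a.natDegree)
        = padicNorm p a.leadingCoeff * padicNorm p t ^ a.natDegree := by
      rw [padicNorm.mul, padicNorm_pow']
    -- norm of the rest
    have herase : padicNorm p (a.eraseLead.eval t)
        < padicNorm p a.leadingCoeff * padicNorm p t ^ a.natDegree := by
      have hmax : max 1 (padicNorm p t) = padicNorm p t := max_eq_right (le_of_lt ht1)
      have h1 : padicNorm p (a.eraseLead.eval t)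
          ≤ Cb p a * max 1 (padicNorm p t) ^ (a.natDegree - 1) := by
        apply eval_norm_le p _ _ _ (Cb_nonneg p a) _ (Polynomial.eraseLead_natDegree_le a)
        intro i
        rw [Polynomial.eraseLead_coeff]
        split
        · rw [padicNorm.zero]; exact Cb_nonneg p a
        · exact coeff_le_Cb p a i
      rw [hmax] at h1
      have h2 : Cb p a * padicNorm p t ^ (a.natDegree - 1)
          < padicNorm p a.leadingCoeff * padicNorm p t ^ a.natDegree := by
        have hpow : padicNorm p t ^ a.natDegree
            = padicNorm p t * padicNorm p t ^ (a.natDegree - 1) := by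
          rw [← pow_succ', Nat.sub_add_cancel hn]
        rw [hpow, ← mul_assoc]
        exact mul_lt_mul_of_pos_right htC (pow_pos ht0 _)
      exact lt_of_le_of_lt h1 h2
    have hsplit : a.eval t = a.eraseLead.eval t + a.leadingCoeff * t ^ a.natDegree := by
      conv_lhs => rw [← Polynomial.eraseLead_add_C_mul_X_pow a]
      simp only [Polynomial.eval_add, Polynomial.eval_mul, Polynomial.eval_C,
        Polynomial.eval_pow, Polynomial.eval_X]
    have hne : padicNorm p (a.eraseLead.eval t)
        ≠ padicNorm p (a.leadingCoeff * t ^ a.natDegree) := by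
      rw [hlead]; exact ne_of_lt herase
    rw [hsplit, padicNorm.add_eq_max_of_ne hne, hlead,
      max_eq_right (le_of_lt (by rw [← hlead]; rw [hlead]; exact herase))]
    calc padicNorm p a.leadingCoeff
        = padicNorm p a.leadingCoeff * 1 := (mul_one _).symm
      _ ≤ padicNorm p a.leadingCoeff * padicNorm p t ^ a.natDegree := by
          apply mul_le_mul_of_nonneg_left _ (le_of_lt hLN)
          calc (1:ℚ) = 1 ^ a.natDegree := (one_pow _).symm
            _ ≤ padicNorm p t ^ a.natDegree :=
                pow_le_pow_left₀ zero_le_one (le_of_lt ht1) _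

theorem padic_lower_bound_coprime_polys
    (f g : Polynomial ℚ) (hf : f ≠ 0) (hg : g ≠ 0) (hfg : IsCoprime f g)
    (p : ℕ) (hp : p.Prime) :
    ∃ c : ℚ, 0 < c ∧ ∀ t : ℚ,
      c ≤ max (padicNorm p (f.eval t)) (padicNorm p (g.eval t)) := by
  haveI := Fact.mk hp
  obtain ⟨a, b, hab⟩ := hfg
  have hL : f.leadingCoeff ≠ 0 := Polynomial.leadingCoeff_ne_zero.2 hf
  have hLN : 0 < padicNorm p f.leadingCoeff :=
    lt_of_le_of_ne (padicNorm.nonneg _) (Ne.symm (padicNorm.nonzero hL))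
  set B : ℚ := max 1 (Cb p f / padicNorm p f.leadingCoeff) with hB
  have hB1 : (1 : ℚ) ≤ B := le_max_left _ _
  set M : ℚ := max 1 (max (Cb p a * B ^ a.natDegree) (Cb p b * B ^ b.natDegree)) with hMdef
  have hM : (0 : ℚ) < M := lt_of_lt_of_le one_pos (le_max_left _ _)
  refine ⟨min M⁻¹ (padicNorm p f.leadingCoeff), lt_min (inv_pos.2 hM) hLN, fun t => ?_⟩
  by_cases htB : B < padicNorm p t
  · calc min M⁻¹ (padicNorm p f.leadingCoeff) ≤ padicNorm p f.leadingCoeff :=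
        min_le_right _ _
      _ ≤ padicNorm p (f.eval t) := eval_norm_big p f hf t htB
      _ ≤ max _ _ := le_max_left _ _
  · push_neg at htB
    have hmaxB : max 1 (padicNorm p t) ≤ B := max_le hB1 htB
    have hX0 : 0 ≤ max (padicNorm p (f.eval t)) (padicNorm p (g.eval t)) :=
      le_trans (padicNorm.nonneg _) (le_max_left _ _)
    have key : (1 : ℚ) ≤ M * max (padicNorm p (f.eval t)) (padicNorm p (g.eval t)) := by
      have h1 : (1 : ℚ) = padicNorm p ((a * f + b * g).eval t) := by
        rw [hab]; simp [padicNorm.one]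
      have h2 : padicNorm p ((a * f + b * g).eval t)
          ≤ max (padicNorm p (a.eval t) * padicNorm p (f.eval t))
              (padicNorm p (b.eval t) * padicNorm p (g.eval t)) := by
        rw [Polynomial.eval_add, Polynomial.eval_mul, Polynomial.eval_mul]
        calc padicNorm p _ ≤ max (padicNorm p (a.eval t * f.eval t))
              (padicNorm p (b.eval t * g.eval t)) := padicNorm.nonarchimedean
          _ = _ := by rw [padicNorm.mul, padicNorm.mul]
      have bound : ∀ (q : Polynomial ℚ), padicNorm p (q.eval t) ≤ Cb p q * B ^ q.natDegree := by
        intro q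
        calc padicNorm p (q.eval t)
            ≤ Cb p q * max 1 (padicNorm p t) ^ q.natDegree :=
              eval_norm_le p q t _ (Cb_nonneg p q) (coeff_le_Cb p q) (le_refl _)
          _ ≤ Cb p q * B ^ q.natDegree :=
              mul_le_mul_of_nonneg_left
                (pow_le_pow_left₀ (le_trans zero_le_one (le_max_left _ _)) hmaxB _)
                (Cb_nonneg p q)
      have h3 : max (padicNorm p (a.eval t) * padicNorm p (f.eval t))
              (padicNorm p (b.eval t) * padicNorm p (g.eval t))
          ≤ M * max (padicNorm p (f.eval t)) (padicNorm p (g.eval t)) := by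
        apply max_le
        · calc padicNorm p (a.eval t) * padicNorm p (f.eval t)
              ≤ M * padicNorm p (f.eval t) :=
                mul_le_mul_of_nonneg_right
                  (le_trans (bound a) (le_trans (le_max_left _ _) (le_max_right _ _)))
                  (padicNorm.nonneg _)
            _ ≤ M * _ := mul_le_mul_of_nonneg_left (le_max_left _ _) (le_of_lt hM)
        · calc padicNorm p (b.eval t) * padicNorm p (g.eval t)
              ≤ M * padicNorm p (g.eval t) :=
                mul_le_mul_of_nonneg_right
                  (le_trans (bound b) (le_trans (le_max_right _ _) (le_max_right _ _)))
                  (padicNorm.nonneg _)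
            _ ≤ M * _ := mul_le_mul_of_nonneg_left (le_max_right _ _) (le_of_lt hM)
      calc (1:ℚ) = _ := h1
        _ ≤ _ := h2
        _ ≤ _ := h3
    calc min M⁻¹ (padicNorm p f.leadingCoeff) ≤ M⁻¹ := min_le_left _ _
      _ ≤ max (padicNorm p (f.eval t)) (padicNorm p (g.eval t)) := by
          rw [inv_eq_one_div, div_le_iff₀ hM]
          linarith [key, mul_comm M (max (padicNorm p (f.eval t)) (padicNorm p (g.eval t)))]
end

section
/- Let E be an elliptic curve over ℚ given by y² = x³ + Ax + B with A, B ∈ ℤ. Then E has a rational point of order 3 if and only if there exist a, b ∈ ℤ such that A = 6ab + 27a⁴ and B = b² − 27a⁶. -/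
/-!
A point `P ≠ 0` has order 3 iff `2P = -P`, i.e. iff `P = (x, y)` is a flex: `y ≠ 0` and the
tangent slope `ℓ = (3x² + A) / (2y)` satisfies `ℓ² = 3x`. Writing `ℓ = 3a` and `b = y - 9a³`, the
curve equation and the slope equation become `A = 6ab + 27a⁴` and `B = b² - 27a⁶`; conversely such
`a, b` give the flex `(3a², b + 9a³)`, which is not 2-torsion since
`Δ = -432 (b + 9a³)³ (b + 5a³)`.

Over `ℚ` with `A, B ∈ ℤ`, eliminating `b` shows that `3a` is a root of the monic integer polynomial
`X⁸ + 18AX⁴ + 108BX² - 27A²`, hence an integer, and divisible by 3; then `b ∈ ℤ` because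
`b² = B + 27a⁶`.
-/

namespace WeierstrassCurve.Affine.Point

variable {F : Type*} [Field F] [DecidableEq F] {W : WeierstrassCurve.Affine F}

theorem three_nsmul_some_eq_zero_iff {x y : F} (h : W.Nonsingular x y) :
    3 • some x y h = 0 ↔ y ≠ W.negY x y ∧ W.addX x x (W.slope x x y y) = x := by
  rw [show (3 : ℕ) • some x y h = some x y h + some x y h + some x y h by
    rw [succ_nsmul, two_nsmul], add_eq_zero_iff_eq_neg]
  by_cases hy : y = W.negY x y
  · rw [add_self_of_Y_eq hy]
    exact ⟨fun h0 => absurd (neg_eq_zero.mp h0.symm) (some_ne_zero h),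
      fun ⟨hne, _⟩ => absurd hy hne⟩
  · rw [add_self_of_Y_ne' hy, neg_inj, some.injEq, negAddY]
    constructor
    · exact fun ⟨hx, _⟩ => ⟨hy, hx⟩
    · rintro ⟨-, hx⟩
      exact ⟨hx, by rw [hx, sub_self, mul_zero, zero_add]⟩

end WeierstrassCurve.Affine.Point

namespace WeierstrassCurve

open Affine.Point

variable {F : Type*} [Field F] {W : WeierstrassCurve F} [W.IsShortNF]

theorem Δ_eq_of_isShortNF_of_a₄_a₆_eq {a b : F} (hA : W.a₄ = 6 * a * b + 27 * a ^ 4)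
    (hB : W.a₆ = b ^ 2 - 27 * a ^ 6) : W.Δ = -432 * (b + 9 * a ^ 3) ^ 3 * (b + 5 * a ^ 3) := by
  rw [Δ_of_isShortNF, hA, hB]
  ring

theorem negY_of_isShortNF (x y : F) : W.toAffine.negY x y = -y := by
  rw [Affine.negY, a₁_of_isShortNF, a₃_of_isShortNF]
  ring

theorem equation_iff_of_isShortNF (x y : F) :
    W.toAffine.Equation x y ↔ y ^ 2 = x ^ 3 + W.a₄ * x + W.a₆ := by
  rw [Affine.equation_iff, a₁_of_isShortNF, a₂_of_isShortNF, a₃_of_isShortNF]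
  constructor <;> intro h <;> linear_combination h

variable [DecidableEq F]

theorem Affine.Point.three_nsmul_some_eq_zero_iff_of_isShortNF {x y : F}
    (h : W.toAffine.Nonsingular x y) :
    3 • some x y h = 0 ↔ 2 * y ≠ 0 ∧ ∃ ℓ, ℓ * (2 * y) = 3 * x ^ 2 + W.a₄ ∧ ℓ ^ 2 = 3 * x := by
  have hy : y ≠ W.toAffine.negY x y ↔ 2 * y ≠ 0 := by
    rw [negY_of_isShortNF, not_iff_not]
    constructor <;> intro h <;> linear_combination h
  rw [three_nsmul_some_eq_zero_iff, hy]
  refine and_congr_right fun h2y => ?_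
  have hslope : W.toAffine.slope x x y y * (2 * y) = 3 * x ^ 2 + W.a₄ := by
    rw [Affine.slope_of_Y_ne rfl (hy.mpr h2y), negY_of_isShortNF, a₁_of_isShortNF,
      a₂_of_isShortNF, show y - -y = 2 * y by ring, div_mul_cancel₀ _ h2y]
    ring
  rw [Affine.addX, a₁_of_isShortNF, a₂_of_isShortNF]
  constructor
  · exact fun hx => ⟨_, hslope, by linear_combination hx⟩
  · rintro ⟨ℓ, hℓ, hx⟩
    obtain rfl : ℓ = W.toAffine.slope x x y y :=
      mul_right_cancel₀ h2y (hℓ.trans hslope.symm)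
    linear_combination hx

theorem exists_a₄_a₆_eq_of_addOrderOf_eq_three (h3 : (3 : F) ≠ 0) {P : W.toAffine.Point}
    (hP : addOrderOf P = 3) :
    ∃ a b : F, W.a₄ = 6 * a * b + 27 * a ^ 4 ∧ W.a₆ = b ^ 2 - 27 * a ^ 6 := by
  obtain ⟨h3P, hP0⟩ := addOrderOf_eq_prime_iff.mp hP
  rcases P with _ | ⟨x, y, h⟩
  · exact absurd rfl hP0
  obtain ⟨-, ℓ, hslope, hx⟩ := (three_nsmul_some_eq_zero_iff_of_isShortNF h).mp h3P
  have hcurve := (equation_iff_of_isShortNF x y).mp h.1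
  obtain ⟨a, rfl⟩ : ∃ a, ℓ = 3 * a := ⟨ℓ / 3, (mul_div_cancel₀ ℓ h3).symm⟩
  obtain rfl : x = 3 * a ^ 2 := mul_left_cancel₀ h3 (by linear_combination -hx)
  exact ⟨a, y - 9 * a ^ 3, by linear_combination -hslope,
    by linear_combination -hcurve + 3 * a ^ 2 * hslope⟩

theorem exists_addOrderOf_eq_three_of_a₄_a₆_eq (hΔ : W.Δ ≠ 0) {a b : F}
    (hA : W.a₄ = 6 * a * b + 27 * a ^ 4) (hB : W.a₆ = b ^ 2 - 27 * a ^ 6) :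
    ∃ P : W.toAffine.Point, addOrderOf P = 3 := by
  have h : W.toAffine.Nonsingular (3 * a ^ 2) (b + 9 * a ^ 3) := by
    rw [← Affine.equation_iff_nonsingular_of_Δ_ne_zero hΔ, equation_iff_of_isShortNF, hA, hB]
    ring
  have h2y : 2 * (b + 9 * a ^ 3) ≠ 0 := fun h2y => hΔ <| by
    rw [Δ_eq_of_isShortNF_of_a₄_a₆_eq hA hB]
    linear_combination -216 * (b + 9 * a ^ 3) ^ 2 * (b + 5 * a ^ 3) * h2y
  refine ⟨some _ _ h, addOrderOf_eq_prime_iff.mpr ⟨?_, some_ne_zero h⟩⟩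
  exact (three_nsmul_some_eq_zero_iff_of_isShortNF h).mpr
    ⟨h2y, 3 * a, by rw [hA]; ring, by ring⟩

theorem exists_addOrderOf_eq_three_iff_of_isShortNF (h3 : (3 : F) ≠ 0) (hΔ : W.Δ ≠ 0) :
    (∃ P : W.toAffine.Point, addOrderOf P = 3) ↔
      ∃ a b : F, W.a₄ = 6 * a * b + 27 * a ^ 4 ∧ W.a₆ = b ^ 2 - 27 * a ^ 6 :=
  ⟨fun ⟨_, hP⟩ => exists_a₄_a₆_eq_of_addOrderOf_eq_three h3 hP,
    fun ⟨_, _, hA, hB⟩ => exists_addOrderOf_eq_three_of_a₄_a₆_eq hΔ hA hB⟩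

end WeierstrassCurve

open Polynomial in
theorem Rat.exists_intCast_eq_of_a₄_a₆_eq {A B : ℤ} {a b : ℚ}
    (hA : (A : ℚ) = 6 * a * b + 27 * a ^ 4) (hB : (B : ℚ) = b ^ 2 - 27 * a ^ 6) :
    ∃ m n : ℤ, (m : ℚ) = a ∧ (n : ℚ) = b := by
  have hoct : (3 * a) ^ 8 + 18 * A * (3 * a) ^ 4 + 108 * B * (3 * a) ^ 2 - 27 * A ^ 2 = 0 := by
    rw [hA, hB]
    ring
  obtain ⟨L, hL⟩ := isInteger_of_is_root_of_monic
    (p := X ^ 8 + C (18 * A) * X ^ 4 + C (108 * B) * X ^ 2 - C (27 * A ^ 2)) (by monicity!)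
    (r := 3 * a) (by simpa [map_ofNat] using hoct)
  rw [algebraMap_int_eq, eq_intCast] at hL
  have hLZ : L ^ 8 + 18 * A * L ^ 4 + 108 * B * L ^ 2 - 27 * A ^ 2 = 0 := by
    exact_mod_cast hL ▸ hoct
  obtain ⟨m, rfl⟩ : 3 ∣ L := Int.prime_three.dvd_of_dvd_pow (n := 8)
    ⟨9 * A ^ 2 - 6 * A * L ^ 4 - 36 * B * L ^ 2, by linear_combination hLZ⟩
  have ha : (m : ℚ) = a := by
    push_cast at hL
    linarith
  obtain ⟨n, hn⟩ := isInteger_of_is_root_of_monic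
    (p := X ^ 2 - C (B + 27 * m ^ 6)) (by monicity!) (r := b) (by simp [map_ofNat, hB, ← ha])
  exact ⟨m, n, ha, by rwa [algebraMap_int_eq, eq_intCast] at hn⟩

theorem rational_three_torsion_iff
    (A B : ℤ) (hΔ : 4 * A ^ 3 + 27 * B ^ 2 ≠ 0) :
    let W : WeierstrassCurve ℚ := ⟨0, 0, 0, (A : ℚ), (B : ℚ)⟩
    (∃ P : W.toAffine.Point, addOrderOf P = 3) ↔
      ∃ a b : ℤ, A = 6 * a * b + 27 * a ^ 4 ∧ B = b ^ 2 - 27 * a ^ 6 := by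
  intro W
  have : W.IsShortNF := ⟨rfl, rfl, rfl⟩
  have ha₄ : W.a₄ = A := rfl
  have ha₆ : W.a₆ = B := rfl
  have hWΔ : W.Δ ≠ 0 := by
    rw [W.Δ_of_isShortNF, ha₄, ha₆]
    exact mul_ne_zero (by norm_num) (by exact_mod_cast hΔ)
  rw [W.exists_addOrderOf_eq_three_iff_of_isShortNF three_ne_zero hWΔ, ha₄, ha₆]
  constructor
  · rintro ⟨a, b, hA, hB⟩
    obtain ⟨m, n, rfl, rfl⟩ := Rat.exists_intCast_eq_of_a₄_a₆_eq hA hB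
    exact ⟨m, n, by exact_mod_cast hA, by exact_mod_cast hB⟩
  · rintro ⟨a, b, rfl, rfl⟩
    exact ⟨a, b, by norm_cast, by norm_cast⟩
end

section
/- Let A, B ∈ ℤ with 4A³ + 27B² ≠ 0, and let E be the elliptic curve y² = x³ + Ax + B. If a, b ∈ ℤ satisfy A = 6ab + 27a⁴ and B = b² − 27a⁶, then the point (3a², 9a³ + b) lies on E and is a 3-torsion point (it satisfies 3P = O). -/
/-!
Put `x = 3a²`, `y = 9a³ + b`. Substituting `A = 6ab + 27a⁴` gives `3x² + A = 6a·y`, so both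
partial derivatives of the curve vanish at `P = (x, y)` if `y = 0`; for nonsingular `P` therefore
`y ≠ 0`, the tangent at `P` has slope `3a`, and it meets `E` again at abscissa `(3a)² - 2x = x`,
i.e. at `P` itself. So `P` is a flex: `2P = -P`, and `3P = O`.
-/

namespace WeierstrassCurve.Affine

variable {F : Type*} [Field F] [DecidableEq F] {W : Affine F}

/-- `hx` says that the tangent at `P` meets the curve again only at `P` itself. -/
theorem three_nsmul_some_eq_zero_of_addX_slope_eq {x y : F} (h : W.Nonsingular x y)
    (hy : y ≠ W.negY x y) (hx : W.addX x x (W.slope x x y y) = x) :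
    3 • Point.some x y h = 0 := by
  have hdouble : Point.some x y h + Point.some x y h = -Point.some x y h := by
    rw [Point.add_self_of_Y_ne' hy]
    congr 1
    simp only [negAddY, hx, sub_self, mul_zero, zero_add]
  rw [succ_nsmul, two_nsmul, hdouble, neg_add_cancel]

end WeierstrassCurve.Affine

open WeierstrassCurve.Affine

section ShortWeierstrass

variable {F : Type*} [Field F] {A B a b : F}

theorem equation_three_sq_of_eq (hA : A = 6 * a * b + 27 * a ^ 4) (hB : B = b ^ 2 - 27 * a ^ 6) :
    (⟨0, 0, 0, A, B⟩ : WeierstrassCurve F).toAffine.Equation (3 * a ^ 2) (9 * a ^ 3 + b) := by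
  rw [equation_iff, hA, hB]
  ring

theorem Y_ne_negY_three_sq_of_nonsingular (hA : A = 6 * a * b + 27 * a ^ 4)
    (h : (⟨0, 0, 0, A, B⟩ : WeierstrassCurve F).toAffine.Nonsingular (3 * a ^ 2) (9 * a ^ 3 + b)) :
    9 * a ^ 3 + b ≠
      (⟨0, 0, 0, A, B⟩ : WeierstrassCurve F).toAffine.negY (3 * a ^ 2) (9 * a ^ 3 + b) := by
  intro hy
  obtain ⟨-, hX | hY⟩ := (nonsingular_iff _ _).mp h
  · have h2y : 2 * (9 * a ^ 3 + b) = 0 := by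
      simp only [negY] at hy
      linear_combination hy
    exact hX (by linear_combination (-3 * a) * h2y - hA)
  · exact hY hy

theorem slope_three_sq_eq [DecidableEq F] (hA : A = 6 * a * b + 27 * a ^ 4)
    (hy : 9 * a ^ 3 + b ≠
      (⟨0, 0, 0, A, B⟩ : WeierstrassCurve F).toAffine.negY (3 * a ^ 2) (9 * a ^ 3 + b)) :
    (⟨0, 0, 0, A, B⟩ : WeierstrassCurve F).toAffine.slope
      (3 * a ^ 2) (3 * a ^ 2) (9 * a ^ 3 + b) (9 * a ^ 3 + b) = 3 * a := by
  rw [slope_of_Y_ne rfl hy, div_eq_iff (sub_ne_zero.mpr hy), negY]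
  linear_combination hA

end ShortWeierstrass

theorem explicit_three_torsion_point_general
    (A B a b : ℤ)
    (hA : A = 6 * a * b + 27 * a ^ 4) (hB : B = b ^ 2 - 27 * a ^ 6) :
    let W : WeierstrassCurve ℚ := ⟨0, 0, 0, (A : ℚ), (B : ℚ)⟩
    W.toAffine.Equation (3 * (a : ℚ) ^ 2) (9 * (a : ℚ) ^ 3 + (b : ℚ)) ∧
      ∀ h : W.toAffine.Nonsingular (3 * (a : ℚ) ^ 2) (9 * (a : ℚ) ^ 3 + (b : ℚ)),
        3 • WeierstrassCurve.Affine.Point.some _ _ h = 0 := by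
  have hAℚ : (A : ℚ) = 6 * a * b + 27 * a ^ 4 := by exact_mod_cast hA
  have hBℚ : (B : ℚ) = b ^ 2 - 27 * a ^ 6 := by exact_mod_cast hB
  refine ⟨equation_three_sq_of_eq hAℚ hBℚ, fun h => ?_⟩
  have hy := Y_ne_negY_three_sq_of_nonsingular hAℚ h
  refine three_nsmul_some_eq_zero_of_addX_slope_eq h hy ?_
  rw [slope_three_sq_eq hAℚ hy, addX]
  ring

theorem explicit_three_torsion_point
    (A B a b : ℤ) (hΔ : 4 * A ^ 3 + 27 * B ^ 2 ≠ 0)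
    (hA : A = 6 * a * b + 27 * a ^ 4) (hB : B = b ^ 2 - 27 * a ^ 6) :
    let W : WeierstrassCurve ℚ := ⟨0, 0, 0, (A : ℚ), (B : ℚ)⟩
    W.toAffine.Equation (3 * (a : ℚ) ^ 2) (9 * (a : ℚ) ^ 3 + (b : ℚ)) ∧
      ∀ h : W.toAffine.Nonsingular (3 * (a : ℚ) ^ 2) (9 * (a : ℚ) ^ 3 + (b : ℚ)),
        3 • WeierstrassCurve.Affine.Point.some _ _ h = 0 :=
  explicit_three_torsion_point_general A B a b hA hB
end

section
/- An elliptic curve E over ℚ given by y² = x³ + Ax + B (with A, B ∈ ℚ) has all of its 2-torsion rational if and only if there exist u, t ∈ ℚ with A = u²·f(t) and B = u³·g(t), where f(t) = −(1/3)(t² − t + 1) and g(t) = (1/27)(−2t³ + 3t² + 3t − 2). -/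
/-!
A monic depressed cubic splits exactly when it is `(X - x)(X - y)(X - z)` with `x + y + z = 0`
(Vieta), so one has to parametrize the pairs `(xy + xz + yz, -xyz)` for such triples. If `x ≠ y`,
scaling by `u = y - x` makes two roots differ by `1`, and the third root `z` fixes
`t = (3z + u) / (2u)`; conversely the roots are `-u(t + 1)/3`, `u(2 - t)/3`, `u(2t - 1)/3`.
If no two roots differ, all three vanish and `u = 0` works.
-/

open Polynomial in
theorem splits_map_X_pow_three_add_C_mul_X_add_C_iff {F K : Type*} [Field F] [Field K]
    (φ : F →+* K) (A B : F) :
    ((X ^ 3 + C A * X + C B : F[X]).map φ).Splits ↔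
      ∃ x y z : K, x + y + z = 0 ∧ φ A = x * y + x * z + y * z ∧ φ B = -(x * y * z) := by
  let P : Cubic F := ⟨1, 0, A, B⟩
  have hP : (X ^ 3 + C A * X + C B : F[X]) = P.toPoly := by simp [P, Cubic.toPoly]
  have ha : P.a ≠ 0 := one_ne_zero
  rw [hP]
  constructor
  · intro hs
    obtain ⟨x, y, z, h3⟩ := (Cubic.splits_iff_roots_eq_three ha).mp hs
    have hb := Cubic.b_eq_three_roots ha h3
    have hc := Cubic.c_eq_three_roots ha h3
    have hd := Cubic.d_eq_three_roots ha h3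
    simp only [P, map_one, map_zero, one_mul] at hb hc hd
    exact ⟨x, y, z, neg_eq_zero.mp hb.symm, hc, hd⟩
  · rintro ⟨x, y, z, hsum, hA, hB⟩
    have hprod : P.toPoly.map φ = (X - C x) * (X - C y) * (X - C z) := by
      rw [← Cubic.map_toPoly, Cubic.prod_X_sub_C_eq, hsum, ← hA, ← hB]
      simp [P, Cubic.map]
    rw [hprod]
    exact ((Splits.X_sub_C x).mul (Splits.X_sub_C y)).mul (Splits.X_sub_C z)

section Parametrization

variable {K : Type*} [Field K]

private theorem twentyseven_ne_zero (h3 : (3 : K) ≠ 0) : (27 : K) ≠ 0 := by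
  simpa [show (27 : K) = 3 ^ 3 by norm_num] using pow_ne_zero 3 h3

theorem exists_param_of_add_add_eq_zero_of_ne (h2 : (2 : K) ≠ 0) (h3 : (3 : K) ≠ 0) {x y z : K}
    (hsum : x + y + z = 0) (hxy : x ≠ y) :
    ∃ u t : K, x * y + x * z + y * z = u ^ 2 * (-(1 / 3) * (t ^ 2 - t + 1)) ∧
      -(x * y * z) = u ^ 3 * ((1 / 27) * (-2 * t ^ 3 + 3 * t ^ 2 + 3 * t - 2)) := by
  have hu : y - x ≠ 0 := sub_ne_zero.mpr hxy.symm
  have hz : z = -x - y := by linear_combination hsum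
  have h27 := twentyseven_ne_zero h3
  refine ⟨y - x, (3 * z + (y - x)) / (2 * (y - x)), ?_, ?_⟩
  · rw [hz]; field_simp; ring
  · rw [hz]; field_simp; ring

theorem exists_param_of_add_add_eq_zero (h2 : (2 : K) ≠ 0) (h3 : (3 : K) ≠ 0) {x y z : K}
    (hsum : x + y + z = 0) :
    ∃ u t : K, x * y + x * z + y * z = u ^ 2 * (-(1 / 3) * (t ^ 2 - t + 1)) ∧
      -(x * y * z) = u ^ 3 * ((1 / 27) * (-2 * t ^ 3 + 3 * t ^ 2 + 3 * t - 2)) := by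
  by_cases hxy : x = y
  · by_cases hxz : x = z
    · have hx : x = 0 := by
        subst hxy hxz
        exact (mul_eq_zero.mp (by linear_combination hsum : (3 : K) * x = 0)).resolve_left h3
      exact ⟨0, 0, by simp [← hxy, ← hxz, hx]⟩
    · obtain ⟨u, t, hA, hB⟩ :=
        exists_param_of_add_add_eq_zero_of_ne h2 h3 (z := y) (by linear_combination hsum) hxz
      exact ⟨u, t, by linear_combination hA, by linear_combination hB⟩
  · exact exists_param_of_add_add_eq_zero_of_ne h2 h3 hsum hxy

theorem exists_add_add_eq_zero_iff_exists_param (h2 : (2 : K) ≠ 0) (h3 : (3 : K) ≠ 0) (a b : K) :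
    (∃ x y z : K, x + y + z = 0 ∧ a = x * y + x * z + y * z ∧ b = -(x * y * z)) ↔
      ∃ u t : K, a = u ^ 2 * (-(1 / 3) * (t ^ 2 - t + 1)) ∧
        b = u ^ 3 * ((1 / 27) * (-2 * t ^ 3 + 3 * t ^ 2 + 3 * t - 2)) := by
  constructor
  · rintro ⟨x, y, z, hsum, rfl, rfl⟩
    exact exists_param_of_add_add_eq_zero h2 h3 hsum
  · rintro ⟨u, t, rfl, rfl⟩
    have h27 := twentyseven_ne_zero h3
    refine ⟨-u * (t + 1) / 3, u * (2 - t) / 3, u * (2 * t - 1) / 3, ?_, ?_, ?_⟩ <;>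
      field_simp <;> ring

end Parametrization

open Polynomial in
theorem full_two_torsion_parametrization_general
    (A B : ℚ) :
    ((X ^ 3 + C A * X + C B : ℚ[X]).map (RingHom.id ℚ)).Splits ↔
      ∃ u t : ℚ, A = u ^ 2 * (-(1 / 3) * (t ^ 2 - t + 1)) ∧
        B = u ^ 3 * ((1 / 27) * (-2 * t ^ 3 + 3 * t ^ 2 + 3 * t - 2)) := by
  rw [splits_map_X_pow_three_add_C_mul_X_add_C_iff]
  exact exists_add_add_eq_zero_iff_exists_param two_ne_zero three_ne_zero A B

open Polynomial in
theorem full_two_torsion_parametrization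
    (A B : ℚ) (hΔ : 4 * A ^ 3 + 27 * B ^ 2 ≠ 0) :
    ((X ^ 3 + C A * X + C B : ℚ[X]).map (RingHom.id ℚ)).Splits ↔
      ∃ u t : ℚ, A = u ^ 2 * (-(1 / 3) * (t ^ 2 - t + 1)) ∧
        B = u ^ 3 * ((1 / 27) * (-2 * t ^ 3 + 3 * t ^ 2 + 3 * t - 2)) :=
  full_two_torsion_parametrization_general A B
end

section
/- For real X ≥ 1, a pair (a, b) ∈ ℝ² satisfies |a| < X^{1/3} and |b³ + ab| < X^{1/2} if and only if either (|b| < α₊ X^{1/6} and |a|³ < X) or (α₊ X^{1/6} ≤ |b| < α₋ X^{1/6} and −X^{1/3} < a < X^{1/2}/|b| − b²), where α₊ is the unique real root of x³ + x − 1 and α₋ is the unique real root of x³ − x − 1. -/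
set_option maxHeartbeats 1000000

theorem region_R2_description
    (ap am : ℝ) (hap : ap ^ 3 + ap - 1 = 0) (ham : am ^ 3 - am - 1 = 0)
    (X : ℝ) (hX : 1 ≤ X) (a b : ℝ) :
    (|a| < X ^ ((1 : ℝ) / 3) ∧ |b ^ 3 + a * b| < X ^ ((1 : ℝ) / 2)) ↔
      ((|b| < ap * X ^ ((1 : ℝ) / 6) ∧ |a| ^ 3 < X) ∨
        (ap * X ^ ((1 : ℝ) / 6) ≤ |b| ∧ |b| < am * X ^ ((1 : ℝ) / 6) ∧
          -X ^ ((1 : ℝ) / 3) < a ∧ a < X ^ ((1 : ℝ) / 2) / |b| - b ^ 2)) := by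
  have hX0 : (0:ℝ) < X := lt_of_lt_of_le one_pos hX
  set Y : ℝ := X ^ ((1:ℝ)/6) with hYdef
  have hY1 : 1 ≤ Y := by
    have h := Real.rpow_le_rpow (by norm_num : (0:ℝ) ≤ 1) hX (by norm_num : (0:ℝ) ≤ 1/6)
    rwa [Real.one_rpow] at h
  have hY0 : 0 < Y := lt_of_lt_of_le one_pos hY1
  have h3 : X ^ ((1:ℝ)/3) = Y ^ 2 := by
    rw [hYdef, ← Real.rpow_natCast (X ^ ((1:ℝ)/6)) 2, ← Real.rpow_mul hX0.le]
    norm_num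
  have h2 : X ^ ((1:ℝ)/2) = Y ^ 3 := by
    rw [hYdef, ← Real.rpow_natCast (X ^ ((1:ℝ)/6)) 3, ← Real.rpow_mul hX0.le]
    norm_num
  have h6 : X = Y ^ 6 := by
    rw [hYdef, ← Real.rpow_natCast (X ^ ((1:ℝ)/6)) 6, ← Real.rpow_mul hX0.le]
    norm_num
  rw [h3, h2, h6]
  clear hX hX0 h3 h2 h6 hYdef
  clear_value Y
  have hap0 : 0 < ap := by nlinarith [sq_nonneg ap, sq_nonneg (ap + 1), sq_nonneg (ap - 1)]
  have hap1 : ap < 1 := by nlinarith [mul_pos hap0 hap0, sq_nonneg (ap - 1), sq_nonneg (ap + 1)]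
  have ham1 : 1 < am := by nlinarith [sq_nonneg am, sq_nonneg (am + 1), sq_nonneg (am - 1)]
  have habs : |b ^ 3 + a * b| = |b| * |b ^ 2 + a| := by
    rw [show b ^ 3 + a * b = b * (b ^ 2 + a) by ring, abs_mul]
  have hb2 : |b| ^ 2 = b ^ 2 := sq_abs b
  have hwb : |b| * b ^ 2 = |b| ^ 3 := by rw [← hb2]; ring
  by_cases hb : |b| < ap * Y
  · constructor
    · rintro ⟨h1, _⟩
      refine Or.inl ⟨hb, ?_⟩
      have := pow_lt_pow_left₀ h1 (abs_nonneg a) (by norm_num : (3:ℕ) ≠ 0)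
      nlinarith
    · rintro (⟨_, h1⟩ | ⟨h1, _⟩)
      · have ha : |a| < Y ^ 2 := by
          by_contra hcon
          push_neg at hcon
          have := pow_le_pow_left₀ (by positivity) hcon 3
          nlinarith
        refine ⟨ha, ?_⟩
        rw [habs]
        have t1 : |b| ^ 3 < (ap * Y) ^ 3 :=
          pow_lt_pow_left₀ hb (abs_nonneg b) (by norm_num : (3:ℕ) ≠ 0)
        have t2 : |b ^ 2 + a| ≤ b ^ 2 + |a| :=
          (abs_add_le _ _).trans (by rw [abs_of_nonneg (sq_nonneg b)])
        have t3 : |b| * |b ^ 2 + a| ≤ |b| * (b ^ 2 + |a|) :=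
          mul_le_mul_of_nonneg_left t2 (abs_nonneg b)
        have hkey : ap ^ 3 * Y ^ 3 + ap * Y ^ 3 = Y ^ 3 := by linear_combination Y ^ 3 * hap
        have m1 : |b| * |a| ≤ |b| * Y ^ 2 := mul_le_mul_of_nonneg_left ha.le (abs_nonneg b)
        have m2 : |b| * Y ^ 2 ≤ ap * Y * Y ^ 2 := mul_le_mul_of_nonneg_right hb.le (sq_nonneg Y)
        nlinarith [t1, t3, hwb, hkey, m1, m2]
      · exact absurd hb (not_lt.mpr h1)
  · push_neg at hb
    have hbpos : 0 < |b| := lt_of_lt_of_le (by positivity) hb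
    constructor
    · rintro ⟨h1, h2⟩
      rw [habs] at h2
      obtain ⟨ha1, ha2⟩ := abs_lt.mp h1
      refine Or.inr ⟨hb, ?_, ha1, ?_⟩
      · by_contra hcon
        push_neg at hcon
        have h7 : |b| * (b ^ 2 + a) ≤ |b| * |b ^ 2 + a| :=
          mul_le_mul_of_nonneg_left (le_abs_self _) (abs_nonneg b)
        have key : 0 ≤ (|b| - am * Y) * (|b| ^ 2 + |b| * (am * Y) + (am * Y) ^ 2 - Y ^ 2) := by
          apply mul_nonneg (by linarith)
          have hamY : 0 < am * Y := mul_pos (lt_trans one_pos ham1) hY0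
          nlinarith [sq_nonneg |b|, mul_nonneg hbpos.le hamY.le, mul_pos hY0 hY0]
        have hs : (am * Y) ^ 3 - (am * Y) * Y ^ 2 = Y ^ 3 := by linear_combination Y ^ 3 * ham
        have k2 : Y ^ 3 ≤ |b| ^ 3 - |b| * Y ^ 2 := by nlinarith [key, hs]
        have hpos : 0 < |b| * (a + Y ^ 2) := mul_pos hbpos (by linarith)
        nlinarith [k2, h7, h2, hpos, hwb]
      · rw [lt_sub_iff_add_lt, lt_div_iff₀ hbpos]
        have h5 : |b| * (b ^ 2 + a) ≤ |b| * |b ^ 2 + a| :=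
          mul_le_mul_of_nonneg_left (le_abs_self _) (abs_nonneg b)
        nlinarith [h5, h2]
    · rintro (⟨h1, _⟩ | ⟨_, hlt, h1, h2⟩)
      · exact absurd hb (not_le.mpr h1)
      · have h2' : (a + b ^ 2) * |b| < Y ^ 3 := by
          rw [← lt_div_iff₀ hbpos]
          linarith
        have hw3 : (ap * Y) ^ 3 ≤ |b| ^ 3 := pow_le_pow_left₀ (by positivity) hb 3
        have hs2 : ap ^ 3 * Y ^ 3 + ap * Y ^ 3 = Y ^ 3 := by linear_combination Y ^ 3 * hap
        have m1 : ap * Y * Y ^ 2 ≤ |b| * Y ^ 2 := mul_le_mul_of_nonneg_right hb (sq_nonneg Y)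
        have ha2 : a < Y ^ 2 := by
          nlinarith [hw3, h2', hwb, hs2, m1, hbpos]
        refine ⟨abs_lt.mpr ⟨h1, ha2⟩, ?_⟩
        rw [habs]
        have hpos2 : 0 < |b| * (a + Y ^ 2) := mul_pos hbpos (by linarith)
        have hup : |b ^ 2 + a| < Y ^ 3 / |b| := by
          rw [abs_lt]
          constructor
          · rw [show -(Y ^ 3 / |b|) = -Y ^ 3 / |b| by ring, div_lt_iff₀ hbpos]
            rcases le_or_gt Y |b| with h | h
            · have hnn : 0 ≤ |b| * (|b| ^ 2 - Y ^ 2) :=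
                mul_nonneg hbpos.le (by nlinarith)
              nlinarith [hwb, hnn, hpos2, pow_pos hY0 3]
            · have hlt2 : |b| * Y ^ 2 < Y * Y ^ 2 :=
                mul_lt_mul_of_pos_right h (by positivity)
              nlinarith [hwb, hpos2, hlt2, pow_pos hbpos 3]
          · rw [lt_div_iff₀ hbpos]
            nlinarith [h2']
        calc |b| * |b ^ 2 + a| < |b| * (Y ^ 3 / |b|) := mul_lt_mul_of_pos_left hup hbpos
          _ = Y ^ 3 := by field_simp
end

section
/- The area of the region R₂(1) = {(a, b) ∈ ℝ² : |a| < 1 and |b³ + ab| < 1} equals 2·log(α₋/α₊) + (4/3)(α₊ + α₋), where α₊ and α₋ are the real roots of x³ + x − 1 and x³ − x − 1 respectively. -/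
/-!
Integrate over `a` first. Since `|b³ + ab| = |b| · |b² + a|`, the fiber over `b` depends only on
`t = |b|`, and for `t > 0` it is the interval `(-1, min 1 ((1 - t³)/t))`. Its length is `2` while
`t³ + t ≤ 1` (i.e. `t ≤ α₊`), `1 + 1/t - t²` while moreover `t³ - t ≤ 1` (i.e. `t ≤ α₋`), and `0`
beyond. Hence the area is `2 (2α₊ + (α₋ - α₊) + log (α₋/α₊) - (α₋³ - α₊³)/3)`, and the defining
equations give `α₋³ - α₊³ = α₋ + α₊`.
-/

open MeasureTheory Set

lemma monotone_cube_add_self : Monotone fun x : ℝ => x ^ 3 + x :=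
  (Odd.strictMono_pow (by decide)).monotone.add monotone_id

lemma cube_sub_self_le_of_le {s t : ℝ} (hs : 0 ≤ s) (ht : 1 ≤ t) (hst : s ≤ t) :
    s ^ 3 - s ≤ t ^ 3 - t := by
  nlinarith [mul_nonneg (sub_nonneg.2 hst) (by nlinarith : 0 ≤ t ^ 2 + t * s + s ^ 2 - 1)]

lemma integral_one_add_inv_sub_sq {a b : ℝ} (ha : 0 < a) (hb : 0 < b) :
    ∫ t in a..b, (1 + t⁻¹ - t ^ 2) = b - a + Real.log (b / a) - (b ^ 3 - a ^ 3) / 3 := by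
  have hinv : IntervalIntegrable (fun t : ℝ => t⁻¹) volume a b :=
    intervalIntegrable_inv_iff.2 (Or.inr (notMem_uIcc_of_lt ha hb))
  rw [intervalIntegral.integral_sub (intervalIntegrable_const.add hinv) (by simp),
    intervalIntegral.integral_add intervalIntegrable_const hinv, integral_inv_of_pos ha hb,
    integral_pow]
  simp
  ring

noncomputable def fiberLength (t : ℝ) : ℝ := max 0 (1 + min 1 ((1 - t ^ 3) / t))

lemma fiberLength_nonneg (t : ℝ) : 0 ≤ fiberLength t := le_max_left _ _

lemma fiberLength_le_two (t : ℝ) : fiberLength t ≤ 2 :=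
  max_le zero_le_two (by linarith [min_le_left 1 ((1 - t ^ 3) / t)])

lemma measurable_fiberLength : Measurable fiberLength := by
  unfold fiberLength; fun_prop

lemma fiberLength_eq_two {t : ℝ} (ht : 0 < t) (h : t ^ 3 + t ≤ 1) : fiberLength t = 2 := by
  have : 1 ≤ (1 - t ^ 3) / t := by rw [le_div_iff₀ ht]; linarith
  rw [fiberLength, min_eq_left this]; norm_num

lemma fiberLength_eq {t : ℝ} (ht : 0 < t) (h₁ : 1 ≤ t ^ 3 + t) (h₂ : t ^ 3 - t ≤ 1) :
    fiberLength t = 1 + t⁻¹ - t ^ 2 := by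
  have hle : (1 - t ^ 3) / t ≤ 1 := by rw [div_le_iff₀ ht]; linarith
  have hge : -1 ≤ (1 - t ^ 3) / t := by rw [le_div_iff₀ ht]; linarith
  rw [fiberLength, min_eq_right hle, max_eq_right (by linarith)]
  field_simp
  ring

lemma fiberLength_eq_zero {t : ℝ} (ht : 0 < t) (h : 1 ≤ t ^ 3 - t) : fiberLength t = 0 := by
  have : (1 - t ^ 3) / t ≤ -1 := by rw [div_le_iff₀ ht]; linarith
  exact max_eq_left (by linarith [min_le_right 1 ((1 - t ^ 3) / t)])

lemma fiber_eq_Ioo {t : ℝ} (ht : 0 < t) :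
    {a : ℝ | |a| < 1 ∧ |t ^ 3 + a * t| < 1} = Ioo (-1) (min 1 ((1 - t ^ 3) / t)) := by
  ext a
  simp only [mem_ofPred_eq, abs_lt, mem_Ioo, lt_min_iff, lt_div_iff₀ ht]
  constructor
  · rintro ⟨⟨h₁, h₂⟩, -, h₃⟩
    exact ⟨h₁, h₂, by linarith⟩
  · rintro ⟨h₁, h₂, h₃⟩
    refine ⟨⟨h₁, h₂⟩, ?_, by linarith⟩
    -- `a > -1` already forces `t³ + at > t³ - t > -1`
    nlinarith [mul_lt_mul_of_pos_right h₁ ht, mul_nonneg ht.le (sq_nonneg (t - 1)),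
      sq_nonneg (2 * t - 1)]

lemma volume_fiber {b : ℝ} (hb : b ≠ 0) :
    volume {a : ℝ | |a| < 1 ∧ |b ^ 3 + a * b| < 1} = ENNReal.ofReal (fiberLength |b|) := by
  have habs : ∀ a : ℝ, |b ^ 3 + a * b| = abs (|b| ^ 3 + a * |b|) := fun a => by
    rw [show b ^ 3 + a * b = b * (b ^ 2 + a) by ring,
      show |b| ^ 3 + a * |b| = |b| * (|b| ^ 2 + a) by ring, abs_mul, abs_mul, abs_abs, sq_abs]
  simp_rw [habs, fiber_eq_Ioo (abs_pos.2 hb), Real.volume_Ioo, fiberLength, ENNReal.ofReal_max]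
  simp [add_comm]

lemma volume_region_eq_lintegral :
    volume {p : ℝ × ℝ | |p.1| < 1 ∧ |p.2 ^ 3 + p.1 * p.2| < 1} =
      ∫⁻ b, ENNReal.ofReal (fiberLength |b|) := by
  have hmeas : MeasurableSet {p : ℝ × ℝ | |p.1| < 1 ∧ |p.2 ^ 3 + p.1 * p.2| < 1} :=
    (measurableSet_lt (f := fun p : ℝ × ℝ => |p.1|) (by fun_prop) measurable_const).inter
      (measurableSet_lt (f := fun p : ℝ × ℝ => |p.2 ^ 3 + p.1 * p.2|) (by fun_prop)
        measurable_const)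
  rw [Measure.volume_eq_prod, Measure.prod_apply_symm hmeas]
  refine lintegral_congr_ae ?_
  filter_upwards [compl_mem_ae_iff.mpr (Real.volume_singleton (a := 0))] with b hb
  exact volume_fiber hb

lemma integrable_fiberLength_abs : Integrable (fun x : ℝ => fiberLength |x|) := by
  refine (integrableOn_iff_integrable_of_support_subset (s := Icc (-2) 2) ?_).mp ?_
  · intro x hx
    by_contra hmem
    have h2 : 2 < |x| := lt_of_not_ge fun h => hmem (abs_le.mp h)
    exact hx (fiberLength_eq_zero (by linarith)
      (by nlinarith [mul_lt_mul'' h2 h2 zero_le_two zero_le_two]))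
  · refine Measure.integrableOn_of_bounded (M := 2) measure_Icc_lt_top.ne
      (measurable_fiberLength.comp measurable_abs).aestronglyMeasurable (ae_of_all _ fun x => ?_)
    rw [Real.norm_of_nonneg (fiberLength_nonneg _)]
    exact fiberLength_le_two _

lemma setIntegral_fiberLength_Ioi {α β : ℝ} (hα : α ^ 3 + α - 1 = 0) (hβ : β ^ 3 - β - 1 = 0) :
    ∫ t in Ioi 0, fiberLength t = α + β + Real.log (β / α) - (β ^ 3 - α ^ 3) / 3 := by
  have hα₀ : 0 < α := by nlinarith [sq_nonneg α]
  have hα₁ : α < 1 := by nlinarith [pow_pos hα₀ 3]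
  have hβ₁ : 1 < β := by nlinarith [sq_nonneg (β + 1), sq_nonneg (β - 1), sq_nonneg β]
  have hαβ : α ≤ β := by linarith
  have hI : IntegrableOn fiberLength (Ioi 0) :=
    integrable_fiberLength_abs.integrableOn.congr_fun
      (fun t ht => by simp only [abs_of_pos (mem_Ioi.1 ht)]) measurableSet_Ioi
  rw [← Ioc_union_Ioi_eq_Ioi hα₀.le, setIntegral_union (Ioc_disjoint_Ioi le_rfl) measurableSet_Ioi
      (hI.mono_set Ioc_subset_Ioi_self) (hI.mono_set (Ioi_subset_Ioi hα₀.le)),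
    ← Ioc_union_Ioi_eq_Ioi hαβ,
    setIntegral_union (Ioc_disjoint_Ioi le_rfl) measurableSet_Ioi
      (hI.mono_set (Ioc_subset_Ioi_self.trans (Ioi_subset_Ioi hα₀.le)))
      (hI.mono_set (Ioi_subset_Ioi (hα₀.le.trans hαβ)))]
  have h_two : ∫ t in Ioc 0 α, fiberLength t = 2 * α := by
    rw [setIntegral_congr_fun measurableSet_Ioc (g := fun _ => 2) fun t ht =>
        fiberLength_eq_two ht.1 (by linarith [monotone_cube_add_self ht.2]),
      setIntegral_const, Real.volume_real_Ioc_of_le hα₀.le, smul_eq_mul]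
    ring
  have h_mid : ∫ t in Ioc α β, fiberLength t =
      β - α + Real.log (β / α) - (β ^ 3 - α ^ 3) / 3 := by
    rw [setIntegral_congr_fun measurableSet_Ioc (g := fun t => 1 + t⁻¹ - t ^ 2) fun t ht =>
        fiberLength_eq (hα₀.trans ht.1) (by linarith [monotone_cube_add_self ht.1.le])
          (by linarith [cube_sub_self_le_of_le (hα₀.trans ht.1).le hβ₁.le ht.2]),
      ← intervalIntegral.integral_of_le hαβ, integral_one_add_inv_sub_sq hα₀ (hα₀.trans_le hαβ)]
  have h_zero : ∫ t in Ioi β, fiberLength t = 0 := by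
    refine (setIntegral_congr_fun measurableSet_Ioi (g := fun _ => 0)
      fun t (ht : β < t) => ?_).trans (integral_zero _ _)
    exact fiberLength_eq_zero (by linarith)
      (by linarith [cube_sub_self_le_of_le (by linarith) (by linarith) ht.le])
  rw [h_two, h_mid, h_zero]
  ring

open MeasureTheory in
theorem area_R2_one
    (ap am : ℝ) (hap : ap ^ 3 + ap - 1 = 0) (ham : am ^ 3 - am - 1 = 0) :
    volume {p : ℝ × ℝ | |p.1| < 1 ∧ |p.2 ^ 3 + p.1 * p.2| < 1} =
      ENNReal.ofReal (2 * Real.log (am / ap) + (4 / 3) * (ap + am)) := by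
  rw [volume_region_eq_lintegral, ← ofReal_integral_eq_lintegral_ofReal integrable_fiberLength_abs
      (ae_of_all _ fun _ => fiberLength_nonneg _), integral_comp_abs,
    setIntegral_fiberLength_Ioi hap ham]
  congr 1
  linear_combination (2 / 3) * hap - (2 / 3) * ham
end
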